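/- A differential polynomial f in one variable satisfies \frac{\delta f}{\delta u} = 0 if and only if f = c + \partial_x g for some constant c and differential polynomial g, where \frac{\delta f}{\delta u} = \sum_{n \ge 0}(-\partial_x)^n \frac{\partial f}{\partial u_n} and \partial_x = \sum_{i\ge 0} u_{i+1}\frac{\partial}{\partial u_i}. -/

import Mathlib

open MvPolynomial

/-- The ring of differential polynomials in one variable: `X i` represents `u_i`. -/
abbrev DiffPoly : Type := MvPolynomial ℕ ℚ

/-- The total `x`-derivative `∂_x = ∑ u_{i+1} ∂/∂u_i`. -/
noncomputable def dx : Module.End ℚ DiffPoly :=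
  (MvPolynomial.mkDerivation ℚ (fun i => (X (i + 1) : DiffPoly))).toLinearMap

/-- The variational derivative `δf/δu = ∑ (-∂_x)^n (∂f/∂u_n)`. -/
noncomputable def varDer (f : DiffPoly) : DiffPoly :=
  ∑ᶠ n : ℕ, ((-1 : ℚ) ^ n) • ((dx ^ n) (pderiv n f))

/-- `dx` as a derivation. -/
noncomputable def Dx : Derivation ℚ DiffPoly DiffPoly :=
  MvPolynomial.mkDerivation ℚ (fun i => (X (i + 1) : DiffPoly))

lemma dx_apply (p : DiffPoly) : dx p = Dx p := rfl

lemma dx_X (i : ℕ) : dx (X i) = X (i + 1) := by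
  rw [dx_apply]; exact mkDerivation_X _ _ _

lemma dx_mul (a b : DiffPoly) : dx (a * b) = dx a * b + a * dx b := by
  rw [dx_apply, Derivation.leibniz]
  simp [smul_eq_mul, dx_apply, mul_comm]
  ring

/-- commutator of `pderiv (n+1)` with `dx`. -/
lemma pderiv_succ_dx (n : ℕ) (p : DiffPoly) :
    pderiv (n + 1) (dx p) = dx (pderiv (n + 1) p) + pderiv n p := by
  have h : ⁅(pderiv (n+1) : Derivation ℚ DiffPoly DiffPoly), Dx⁆ = pderiv n := by
    apply derivation_ext
    intro j
    rw [Derivation.commutator_apply]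
    simp only [Dx, mkDerivation_X, pderiv_X]
    rcases eq_or_ne n j with rfl | hnj
    · simp [Pi.single_eq_same, Pi.single_apply]
    · have h1 : n ≠ j := hnj
      have h2 : (n+1 : ℕ) ≠ j + 1 := by omega
      by_cases hj : (n+1 : ℕ) = j
      · subst hj
        simp [Pi.single_apply]
      · simp [Pi.single_apply, hj, h2, h1]
  have := congrFun (congrArg DFunLike.coe h) p
  rw [Derivation.commutator_apply] at this
  rw [dx_apply, dx_apply]
  rw [sub_eq_iff_eq_add] at this
  rw [this]
  ring_nf

lemma pderiv_zero_dx (p : DiffPoly) :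
    pderiv 0 (dx p) = dx (pderiv 0 p) := by
  have h : ⁅(pderiv 0 : Derivation ℚ DiffPoly DiffPoly), Dx⁆ = 0 := by
    apply derivation_ext
    intro j
    rw [Derivation.commutator_apply]
    simp only [Dx, mkDerivation_X, pderiv_X, Pi.single_apply]
    rw [if_neg (by omega)]
    split <;> simp
  have := congrFun (congrArg DFunLike.coe h) p
  rw [Derivation.commutator_apply] at this
  rw [dx_apply, dx_apply]
  simp only [Derivation.zero_apply] at this
  exact sub_eq_zero.mp this

lemma term_support {f : DiffPoly} {N : ℕ} (hN : f.vars ⊆ Finset.range N) {n : ℕ} (hn : N ≤ n) :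
    ((-1 : ℚ) ^ n) • ((dx ^ n) (pderiv n f)) = 0 := by
  have : n ∉ f.vars := fun h => by have := hN h; simp at this; omega
  rw [pderiv_eq_zero_of_notMem_vars this]
  simp

lemma varDer_eq_sum (f : DiffPoly) {N : ℕ} (hN : f.vars ⊆ Finset.range N) :
    varDer f = ∑ n ∈ Finset.range N, ((-1 : ℚ) ^ n) • ((dx ^ n) (pderiv n f)) := by
  apply finsum_eq_finset_sum_of_support_subset
  intro n hn
  simp only [Function.mem_support] at hn
  simp only [Finset.coe_range, Set.mem_Iio]
  by_contra h
  exact hn (term_support hN (by omega))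

lemma varDer_C (c : ℚ) : varDer (C c) = 0 := by
  have : ∀ n : ℕ, ((-1 : ℚ) ^ n) • ((dx ^ n) (pderiv n (C c : DiffPoly))) = 0 := by
    intro n; rw [pderiv_C]; simp
  unfold varDer
  simp only [this, finsum_zero]

lemma varDer_dx (g : DiffPoly) : varDer (dx g) = 0 := by
  obtain ⟨N, hN⟩ := Finset.exists_nat_subset_range ((dx g).vars ∪ g.vars)
  have hN1 : (dx g).vars ⊆ Finset.range (N+1) := by
    intro i hi
    have := hN (Finset.mem_union_left _ hi)
    simp at this ⊢; omega
  have hgN : pderiv N g = 0 := by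
    apply pderiv_eq_zero_of_notMem_vars
    intro h
    have := hN (Finset.mem_union_right _ h)
    simp at this
  set A : ℕ → DiffPoly := fun n => ((-1:ℚ)^n) • (dx ^ (n+1)) (pderiv n g) with hA
  have hterm : ∀ n : ℕ, ((-1:ℚ)^(n+1)) • (dx ^ (n+1)) (pderiv (n+1) (dx g)) = A (n+1) - A n := by
    intro n
    rw [pderiv_succ_dx, map_add, smul_add]
    have e1 : (dx ^ (n+1)) (dx (pderiv (n+1) g)) = (dx ^ (n+1+1)) (pderiv (n+1) g) := by
      conv_rhs => rw [pow_succ, Module.End.mul_apply]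
    rw [e1, hA]
    simp only []
    rw [sub_eq_add_neg]
    congr 1
    rw [pow_succ, mul_smul]
    simp
  rw [varDer_eq_sum _ hN1, Finset.sum_range_succ']
  have ht0 : ((-1:ℚ)^0) • ((dx^0) (pderiv 0 (dx g))) = A 0 := by
    simp [hA, pderiv_zero_dx, pow_one]
  rw [ht0]
  simp_rw [hterm]
  rw [Finset.sum_range_sub (f := A)]
  simp [hA, hgN]

/-- integration by parts -/
lemma ibp (n : ℕ) (a b : DiffPoly) :
    ∃ h, (dx ^ n) a * b = ((-1 : ℚ) ^ n) • (a * (dx ^ n) b) + dx h := by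
  induction n generalizing b with
  | zero => exact ⟨0, by simp⟩
  | succ n ih =>
    obtain ⟨h, hh⟩ := ih (dx b)
    refine ⟨(dx ^ n) a * b - h, ?_⟩
    have e1 : (dx ^ (n+1)) a = dx ((dx^n) a) := by rw [pow_succ', Module.End.mul_apply]
    have e2 : (dx ^ (n+1)) b = (dx^n) (dx b) := by rw [pow_succ, Module.End.mul_apply]
    rw [e1, e2, map_sub, dx_mul]
    rw [hh, pow_succ]
    simp only [smul_eq_C_mul, map_mul, map_neg, map_one, map_pow]
    ring

lemma dx_pow_X0 (n : ℕ) : (dx ^ n) (X 0) = X n := by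
  induction n with
  | zero => rfl
  | succ n ih => rw [pow_succ', Module.End.mul_apply, ih, dx_X]

/-- Euler identity on monomials -/
lemma euler_monomial {N : ℕ} (d : ℕ →₀ ℕ) (hd : d.support ⊆ Finset.range N) (a : ℚ) :
    ∑ n ∈ Finset.range N, X n * pderiv n (monomial d a) = d.degree • monomial d a := by
  have hterm : ∀ n : ℕ, X n * pderiv n (monomial d a : DiffPoly) = (d n) • monomial d a := by
    intro n
    rw [pderiv_monomial]
    by_cases h : d n = 0
    · simp [h]
    · have hle : Finsupp.single n 1 ≤ d := by
        rw [Finsupp.single_le_iff]; omega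
      rw [X, monomial_mul, one_mul, add_tsub_cancel_of_le hle]
      rw [show a * (d n : ℚ) = d n • a by rw [nsmul_eq_mul]; ring, map_nsmul]
  rw [Finset.sum_congr rfl (fun n _ => hterm n), ← Finset.sum_smul]
  congr 1
  rw [Finsupp.degree_apply]
  exact (Finset.sum_subset hd (fun x _ hx => Finsupp.notMem_support_iff.mp hx)).symm

lemma homogeneousComponent_monomial (k : ℕ) (d : ℕ →₀ ℕ) (a : ℚ) :
    homogeneousComponent k (monomial d a : DiffPoly) =
      if d.degree = k then monomial d a else 0 := by
  rw [homogeneousComponent_of_mem (isHomogeneous_monomial a rfl)]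
  by_cases h : d.degree = k
  · simp [h]
  · simp [h, Ne.symm h]

lemma degree_add' (a b : ℕ →₀ ℕ) : (a + b).degree = a.degree + b.degree := by
  simp [Finsupp.degree_eq_weight_one, map_add]

lemma degree_single' (i : ℕ) : (Finsupp.single i 1).degree = 1 := by
  rw [Finsupp.degree_apply, Finsupp.support_single_ne_zero i one_ne_zero]
  simp

lemma dx_monomial_isHomogeneous (d : ℕ →₀ ℕ) (a : ℚ) :
    (dx (monomial d a : DiffPoly)).IsHomogeneous d.degree := by
  rw [dx_apply, Dx, mkDerivation_monomial]
  rw [← mem_homogeneousSubmodule]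
  apply Submodule.smul_mem
  rw [Finsupp.sum]
  apply Submodule.sum_mem
  intro i hi
  rw [mem_homogeneousSubmodule]
  have hi' : d i ≠ 0 := Finsupp.mem_support_iff.mp hi
  have hterm : (monomial (d - Finsupp.single i 1) ((d i : ℚ))) • (X (i+1) : DiffPoly)
      = monomial ((d - Finsupp.single i 1) + Finsupp.single (i+1) 1) (d i : ℚ) := by
    rw [smul_eq_mul, X, monomial_mul, mul_one]
  rw [hterm]
  apply isHomogeneous_monomial
  rw [degree_add', degree_single']
  have hle : Finsupp.single i 1 ≤ d := by rw [Finsupp.single_le_iff]; omega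
  have h1 : (d - Finsupp.single i 1) + Finsupp.single i 1 = d := tsub_add_cancel_of_le hle
  have h2 : Finsupp.degree (d - Finsupp.single i 1) + 1 = d.degree := by
    conv_rhs => rw [← h1]
    rw [degree_add', degree_single']
  omega

lemma homogeneousComponent_dx (k : ℕ) (p : DiffPoly) :
    homogeneousComponent k (dx p) = dx (homogeneousComponent k p) := by
  have hmon : ∀ (d : ℕ →₀ ℕ) (a : ℚ),
      homogeneousComponent k (dx (monomial d a : DiffPoly))
        = dx (homogeneousComponent k (monomial d a)) := by
    intro d a
    rw [homogeneousComponent_monomial,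
      homogeneousComponent_of_mem (dx_monomial_isHomogeneous d a)]
    by_cases h : d.degree = k
    · simp [h]
    · simp [h, Ne.symm h]
  conv_lhs => rw [p.as_sum]
  conv_rhs => rw [p.as_sum]
  rw [map_sum, map_sum, map_sum, map_sum]
  exact Finset.sum_congr rfl fun d _ => hmon d (coeff d p)

lemma homogeneousComponent_nf {N : ℕ} (f : DiffPoly) (hN : f.vars ⊆ Finset.range N) (k : ℕ) :
    homogeneousComponent k (∑ n ∈ Finset.range N, X n * pderiv n f)
      = k • homogeneousComponent k f := by
  have hsupp : ∀ d ∈ f.support, (d : ℕ →₀ ℕ).support ⊆ Finset.range N := by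
    intro d hd i hi
    exact hN ((mem_vars i).2 ⟨d, hd, hi⟩)
  have key : ∑ n ∈ Finset.range N, X n * pderiv n f
      = ∑ d ∈ f.support, (d.degree : ℕ) • monomial d (coeff d f) := by
    calc ∑ n ∈ Finset.range N, X n * pderiv n f
        = ∑ n ∈ Finset.range N, ∑ d ∈ f.support, X n * pderiv n (monomial d (coeff d f)) := by
          apply Finset.sum_congr rfl
          intro n _
          conv_lhs => rw [f.as_sum]
          rw [map_sum, Finset.mul_sum]
      _ = ∑ d ∈ f.support, ∑ n ∈ Finset.range N, X n * pderiv n (monomial d (coeff d f)) :=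
          Finset.sum_comm
      _ = ∑ d ∈ f.support, d.degree • monomial d (coeff d f) :=
          Finset.sum_congr rfl fun d hd => euler_monomial d (hsupp d hd) _
  rw [key, map_sum]
  conv_rhs => rw [f.as_sum, map_sum, Finset.smul_sum]
  apply Finset.sum_congr rfl
  intro d _
  rw [map_nsmul]
  simp only [homogeneousComponent_monomial]
  by_cases h : d.degree = k
  · simp only [if_pos h, h]
  · simp [h]

/-- Exactness of the variational complex in one dependent variable. -/
theorem varDer_eq_zero_iff (f : DiffPoly) :
    varDer f = 0 ↔ ∃ (c : ℚ) (g : DiffPoly), f = C c + dx g := by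
  constructor
  · intro hf
    obtain ⟨N, hN⟩ := Finset.exists_nat_subset_range f.vars
    have h1 : ∀ n : ℕ, ∃ h, X n * pderiv n f
        = ((-1:ℚ)^n) • (X 0 * (dx^n) (pderiv n f)) + dx h := by
      intro n
      obtain ⟨h, hh⟩ := ibp n (X 0) (pderiv n f)
      rw [dx_pow_X0] at hh
      exact ⟨h, hh⟩
    choose hfun hspec using h1
    set H := ∑ n ∈ Finset.range N, hfun n with hH
    have h2 : ∑ n ∈ Finset.range N, X n * pderiv n f = dx H := by
      rw [hH, map_sum]
      have : ∑ n ∈ Finset.range N, X n * pderiv n f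
          = X 0 * varDer f + ∑ n ∈ Finset.range N, dx (hfun n) := by
        rw [varDer_eq_sum f hN, Finset.mul_sum, ← Finset.sum_add_distrib]
        apply Finset.sum_congr rfl
        intro n _
        rw [hspec n, mul_smul_comm]
      rw [this, hf]
      simp
    have h4 : ∀ k : ℕ, k • homogeneousComponent k f = dx (homogeneousComponent k H) := by
      intro k
      rw [← homogeneousComponent_nf f hN k, h2, homogeneousComponent_dx]
    refine ⟨coeff 0 f,
      ∑ k ∈ Finset.range f.totalDegree, ((k+1 : ℚ))⁻¹ • homogeneousComponent (k+1) H, ?_⟩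
    conv_lhs => rw [← sum_homogeneousComponent f]
    rw [Finset.sum_range_succ', homogeneousComponent_zero, map_sum, add_comm]
    congr 1
    apply Finset.sum_congr rfl
    intro k _
    have hk := h4 (k+1)
    rw [map_smul, ← hk]
    rw [← Nat.cast_smul_eq_nsmul ℚ, ← mul_smul]
    push_cast
    rw [inv_mul_cancel₀ (by positivity)]
    simp
  · rintro ⟨c, g, rfl⟩
    have h1 : varDer (C c + dx g) = varDer (C c) + varDer (dx g) := by
      obtain ⟨N, hN⟩ := Finset.exists_nat_subset_range
        ((C c + dx g : DiffPoly).vars ∪ (C c : DiffPoly).vars ∪ (dx g).vars)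
      have s1 : (C c + dx g : DiffPoly).vars ⊆ Finset.range N := fun i hi =>
        hN (Finset.mem_union_left _ (Finset.mem_union_left _ hi))
      have s2 : (C c : DiffPoly).vars ⊆ Finset.range N := fun i hi =>
        hN (Finset.mem_union_left _ (Finset.mem_union_right _ hi))
      have s3 : (dx g).vars ⊆ Finset.range N := fun i hi =>
        hN (Finset.mem_union_right _ hi)
      rw [varDer_eq_sum _ s1, varDer_eq_sum _ s2, varDer_eq_sum _ s3,
        ← Finset.sum_add_distrib]
      apply Finset.sum_congr rfl
      intro n _
      rw [map_add, map_add, smul_add]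
    rw [h1, varDer_C, varDer_dx, add_zero]
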